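/- arXiv:1003.5894 — 4 statements merged into one kernel-verified Lean document; each statement's English description precedes it below -/
import Mathlib

section
/- For every field k and every integer n ≥ 2, there exist a field extension K of k and a separable field extension L of K of degree [L:K] = n such that the norm map N_{L/K} : Lˣ → Kˣ is not surjective, i.e. N_{L/K}(Lˣ) ≠ Kˣ. -/
/-!
Let `E/F` be a separable extension of degree `n ≥ 2` and put `K = F(t)`, `L = E(t)`; then `L/K`
is separable of degree `n`. A basis of `E/F` is also a basis of `E[t]` over `F[t]`, and setting
`t = 0` in the matrix of multiplication shows that the norm `N(u) ∈ F[t]` of `u ∈ E[t]` has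
constant term `N_{E/F}(u(0))`. Hence `N(t^a u) = t^{na} N(u)` with `t ∤ N(u)` whenever `t ∤ u`:
the `t`-adic valuation of every norm from `L` to `K` is divisible by `n`, so `t` is not a norm.
A suitable `E/F` over `F = k(s)` is cut out by the Eisenstein polynomial `X^n - sX - s`.
-/

open Polynomial

universe u

attribute [local instance] Polynomial.algebra

theorem Algebra.norm_map_of_repr_map {A B A' B' ι : Type*} [CommRing A] [CommRing B] [Algebra A B]
    [CommRing A'] [CommRing B'] [Algebra A' B'] [Fintype ι] [DecidableEq ι]
    (φ : A →+* A') (ψ : B →+* B') (b : Module.Basis ι A B) (b' : Module.Basis ι A' B')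
    (h : ∀ x i, b'.repr (ψ x) i = φ (b.repr x i)) (x : B) :
    Algebra.norm A' (ψ x) = φ (Algebra.norm A x) := by
  have hb : ∀ j, ψ (b j) = b' j := fun j => b'.ext_elem fun i => by
    rw [h, b.repr_self, b'.repr_self, Finsupp.single_apply, Finsupp.single_apply]
    split_ifs <;> simp
  rw [Algebra.norm_eq_matrix_det b', Algebra.norm_eq_matrix_det b, RingHom.map_det]
  congr 1
  ext i j
  simp only [RingHom.mapMatrix_apply, Matrix.map_apply, Algebra.leftMulMatrix_eq_repr_mul, ← h,
    map_mul, hb]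

section PolynomialBaseChange

variable {R S ι : Type*} [CommRing R] [CommRing S] [Algebra R S]

noncomputable def Module.Basis.polynomial (b : Module.Basis ι R S) : Module.Basis ι R[X] S[X] :=
  (Algebra.IsPushout.out : IsBaseChange R[X] (IsScalarTower.toAlgHom R S S[X]).toLinearMap).basis b

theorem Module.Basis.coeff_zero_polynomial_repr (b : Module.Basis ι R S) (p : S[X]) (i : ι) :
    (b.polynomial.repr p i).coeff 0 = b.repr (p.coeff 0) i := by
  induction p using Polynomial.induction_on' with
  | add p q hp hq => simp [hp, hq]
  | monomial d c =>
    have hmon :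
        monomial d c = (X ^ d : R[X]) • (IsScalarTower.toAlgHom R S S[X]).toLinearMap c := by
      rw [Algebra.smul_def, Polynomial.algebraMap_def, coe_mapRingHom, Polynomial.map_pow, map_X,
        ← C_mul_X_pow_eq_monomial, mul_comm]
      rfl
    have hrepr : b.polynomial.repr (monomial d c) i = X ^ d * C (b.repr c i) := by
      rw [hmon, map_smul, Finsupp.smul_apply, Module.Basis.polynomial,
        IsBaseChange.basis_repr_comp_apply, smul_eq_mul, Polynomial.algebraMap_eq]
    rw [hrepr]
    rcases d with _ | d <;> simp

variable (R S) [Module.Free R S] [Module.Finite R S]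

instance Polynomial.moduleFree : Module.Free R[X] S[X] :=
  .of_basis (Module.Free.chooseBasis R S).polynomial

instance Polynomial.moduleFinite : Module.Finite R[X] S[X] :=
  .of_basis (Module.Free.chooseBasis R S).polynomial

theorem finrank_polynomial_polynomial [Nontrivial R] :
    Module.finrank R[X] S[X] = Module.finrank R S := by
  rw [Module.finrank_eq_card_basis (Module.Free.chooseBasis R S).polynomial,
    Module.finrank_eq_card_chooseBasisIndex]

variable {S} in
theorem Polynomial.coeff_zero_norm (p : S[X]) :
    (Algebra.norm R[X] p).coeff 0 = Algebra.norm R (p.coeff 0) := by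
  classical
  have b := Module.Free.chooseBasis R S
  simpa using (Algebra.norm_map_of_repr_map constantCoeff constantCoeff b.polynomial b
    (fun x i => by simpa using (b.coeff_zero_polynomial_repr x i).symm) p).symm

end PolynomialBaseChange

section FractionFields

variable {F E : Type*} [Field F] [Field E] [Algebra F E]
  {K L : Type*} [Field K] [Field L] [Algebra F[X] K] [Algebra E[X] L] [IsFractionRing E[X] L]
  [Algebra K L] [Algebra F[X] L] [IsScalarTower F[X] K L] [IsScalarTower F[X] E[X] L]

variable (F E) in
theorem isSeparable_fractionRing_polynomial [Algebra F K] [Algebra F L] [Algebra E L]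
    [IsScalarTower F K L] [IsScalarTower F E L] [IsScalarTower E E[X] L] [Algebra.IsSeparable F E] :
    Algebra.IsSeparable K L := by
  have hconst (c : E) : algebraMap E L c ∈ separableClosure K L := by
    have : algebraMap E L c ∈ separableClosure F L :=
      (map_mem_separableClosure_iff (IsScalarTower.toAlgHom F E L)).mpr
        (mem_separableClosure_iff.mpr (Algebra.IsSeparable.isSeparable F c))
    exact mem_separableClosure_iff.mpr ((mem_separableClosure_iff.mp this).tower_top K)
  have hX : algebraMap E[X] L X ∈ separableClosure K L := by
    rw [show (X : E[X]) = algebraMap F[X] E[X] X by simp, ← IsScalarTower.algebraMap_apply,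
      IsScalarTower.algebraMap_apply F[X] K L]
    exact IntermediateField.algebraMap_mem _ _
  have hpoly (p : E[X]) : algebraMap E[X] L p ∈ separableClosure K L := by
    induction p using Polynomial.induction_on' with
    | add p q hp hq => rw [map_add]; exact add_mem hp hq
    | monomial d c =>
      rw [← C_mul_X_pow_eq_monomial, map_mul, map_pow, ← Polynomial.algebraMap_eq,
        ← IsScalarTower.algebraMap_apply]
      exact mul_mem (hconst c) (pow_mem hX d)
  rw [← separableClosure.eq_top_iff, eq_top_iff]
  rintro z -
  obtain ⟨p, q, -, rfl⟩ := IsFractionRing.div_surjective (A := E[X]) z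
  exact div_mem (hpoly p) (hpoly q)

variable [FiniteDimensional F E]

theorem Polynomial.natTrailingDegree_norm {p : E[X]} (hp : p ≠ 0) :
    (Algebra.norm F[X] p).natTrailingDegree = Module.finrank F E * p.natTrailingDegree := by
  obtain ⟨u, hpu, hXu⟩ := exists_eq_pow_rootMultiplicity_mul_and_not_dvd p hp 0
  rw [map_zero, sub_zero, rootMultiplicity_eq_natTrailingDegree'] at hpu
  rw [map_zero, sub_zero, X_dvd_iff] at hXu
  have hnormX : Algebra.norm F[X] (X : E[X]) = X ^ Module.finrank F E := by
    rw [show (X : E[X]) = algebraMap F[X] E[X] X by simp, Algebra.norm_algebraMap,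
      finrank_polynomial_polynomial]
  have hnormu : (Algebra.norm F[X] u).coeff 0 ≠ 0 := by
    rw [coeff_zero_norm]
    exact Algebra.norm_ne_zero_iff.mpr hXu
  have hnormu₀ : Algebra.norm F[X] u ≠ 0 := fun h => hnormu (by rw [h, coeff_zero])
  conv_lhs => rw [hpu, map_mul, map_pow, hnormX, ← pow_mul, mul_comm]
  rw [natTrailingDegree_mul_X_pow hnormu₀, natTrailingDegree_eq_zero.mpr (Or.inr hnormu),
    zero_add]

variable [IsFractionRing F[X] K]

variable (F E) in
theorem finrank_fractionRing_polynomial : Module.finrank K L = Module.finrank F E := by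
  rw [IsFractionRing.finrank_eq F[X] K E[X] L, finrank_polynomial_polynomial]

variable (F) in
theorem norm_algebraMap_polynomial (p : E[X]) :
    Algebra.norm K (algebraMap E[X] L p) = algebraMap F[X] K (Algebra.norm F[X] p) := by
  have : FiniteDimensional K L := Module.finite_of_finrank_pos <| by
    rw [finrank_fractionRing_polynomial F E]
    exact Module.finrank_pos
  have : IsIntegralClosure E[X] F[X] L := IsIntegralClosure.of_isIntegrallyClosed _ _ _
  rw [← Algebra.intNorm_eq_norm F[X] E[X], Algebra.algebraMap_intNorm (L := L)]

theorem norm_ne_algebraMap_X (hn : 1 < Module.finrank F E) (z : L) :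
    Algebra.norm K z ≠ algebraMap F[X] K X := by
  intro hz
  obtain ⟨p, q, hq, rfl⟩ := IsFractionRing.div_surjective (A := E[X]) z
  have hq₀ : q ≠ 0 := nonZeroDivisors.ne_zero hq
  have hNq : Algebra.norm F[X] q ≠ 0 := Algebra.norm_ne_zero_iff.mpr hq₀
  have hNp : Algebra.norm F[X] p = X * Algebra.norm F[X] q := by
    apply IsFractionRing.injective F[X] K
    calc algebraMap F[X] K (Algebra.norm F[X] p)
        = Algebra.norm K (algebraMap E[X] L p / algebraMap E[X] L q * algebraMap E[X] L q) := by
          rw [div_mul_cancel₀ _ (IsFractionRing.to_map_ne_zero_of_mem_nonZeroDivisors hq),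
            norm_algebraMap_polynomial F]
      _ = algebraMap F[X] K (X * Algebra.norm F[X] q) := by
          rw [map_mul, hz, norm_algebraMap_polynomial F, map_mul]
  have hp : p ≠ 0 := Algebra.norm_ne_zero_iff.mp (hNp ▸ mul_ne_zero X_ne_zero hNq)
  have hdeg := congrArg natTrailingDegree hNp
  rw [natTrailingDegree_norm hp, natTrailingDegree_mul X_ne_zero hNq, natTrailingDegree_norm hq₀,
    natTrailingDegree_X, add_comm] at hdeg
  have : Module.finrank F E ∣ 1 :=
    (Nat.dvd_add_right (dvd_mul_right _ _)).mp (hdeg ▸ dvd_mul_right _ _)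
  exact hn.ne' (Nat.dvd_one.mp this)

end FractionFields

theorem Prime.exists_irreducible_separable_natDegree_eq {R K : Type*} [CommRing R] [IsDomain R]
    [IsGCDMonoid R] [Field K] [Algebra R K] [IsFractionRing R K] {π : R} (hπ : Prime π) {n : ℕ}
    (hn : 2 ≤ n) : ∃ f : K[X], Irreducible f ∧ f.Separable ∧ f.natDegree = n := by
  set g : R[X] := X ^ n - (C π * X + C π)
  have hlin : (C π * X + C π).degree < (n : WithBot ℕ) :=
    degree_linear_le.trans_lt (by exact_mod_cast (by omega : 1 < n))
  have hmonic : g.Monic := monic_X_pow_sub hlin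
  have hdeg : g.natDegree = n := natDegree_eq_of_degree_eq_some <| by
    rw [degree_sub_eq_left_of_degree_lt (by rwa [degree_X_pow]), degree_X_pow]
  have hcoeff (i : ℕ) (hi : i < n) : g.coeff i = if i ≤ 1 then -π else 0 := by
    rcases i with _ | _ | i <;> simp [g, coeff_X_pow, coeff_C, coeff_X, hi.ne]
  have hEis : g.IsEisensteinAt (Ideal.span {π}) := by
    refine ⟨?_, fun {i} hi => ?_, ?_⟩
    · rw [hmonic.leadingCoeff, Ideal.mem_span_singleton]
      exact hπ.not_dvd_one
    · rw [hcoeff i (hdeg ▸ hi), Ideal.mem_span_singleton]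
      split_ifs
      · exact (dvd_neg).mpr dvd_rfl
      · exact dvd_zero π
    · rw [hcoeff 0 (by omega), if_pos zero_le_one, Ideal.span_singleton_pow,
        Ideal.mem_span_singleton, dvd_neg, pow_two]
      exact fun h => hπ.not_dvd_one ((mul_dvd_mul_iff_left hπ.ne_zero).mp (by rwa [mul_one]))
  have hirr : Irreducible (g.map (algebraMap R K)) :=
    hmonic.isPrimitive.irreducible_iff_irreducible_map_fraction_map.mp
      (hEis.irreducible ((Ideal.span_singleton_prime hπ.ne_zero).mpr hπ) hmonic.isPrimitive
        (by omega))
  -- The term `πX` keeps the derivative nonzero even when the characteristic divides `n`.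
  refine ⟨_, hirr, (separable_iff_derivative_ne_zero hirr).mpr fun h => ?_,
    by rw [hmonic.natDegree_map, hdeg]⟩
  have h0 := congrArg (coeff · 0) h
  simp only [derivative_map, coeff_map, coeff_derivative, hcoeff 1 (by omega)] at h0
  simp [hπ.ne_zero] at h0

theorem AdjoinRoot.isSeparable_of_separable {F : Type*} [Field F] {f : F[X]} [Fact (Irreducible f)]
    (hf : f.Separable) : Algebra.IsSeparable F (AdjoinRoot f) := by
  have hroot : IsSeparable F (root f) := hf.of_dvd (minpoly.dvd F _ (by rw [aeval_eq, mk_self]))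
  rw [← separableClosure.eq_top_iff, eq_top_iff]
  intro z _
  exact IntermediateField.adjoin_simple_le_iff.mpr (mem_separableClosure_iff.mpr hroot)
    (IntermediateField.algebra_adjoin_le_adjoin F _
      (adjoinRoot_eq_top (f := f) ▸ Algebra.mem_top))

/-- For every field `k` and every integer `n ≥ 2`, there
exist a field extension `K` of `k` and a separable field extension `L` of `K`
of degree `[L:K] = n` such that the norm map `N_{L/K} : Lˣ → Kˣ` is not
surjective, i.e. `N_{L/K}(Lˣ) ≠ Kˣ`. -/
theorem exists_extension_norm_not_surjective (k : Type u) [Field k] (n : ℕ) (hn : 2 ≤ n) :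
    ∃ (K : Type u) (_ : Field K) (_ : Algebra k K) (L : Type u) (_ : Field L) (_ : Algebra K L),
      Algebra.IsSeparable K L ∧ Module.finrank K L = n ∧
      ¬ Function.Surjective (Units.map (Algebra.norm K : L →* K) : Lˣ → Kˣ) := by
  obtain ⟨f, hirr, hsep, hdeg⟩ :=
    prime_X.exists_irreducible_separable_natDegree_eq (R := k[X]) (K := RatFunc k) hn
  have := Fact.mk hirr
  let pb := AdjoinRoot.powerBasis hirr.ne_zero
  have := pb.finite
  have := AdjoinRoot.isSeparable_of_separable hsep
  have hfinrank : Module.finrank (RatFunc k) (AdjoinRoot f) = n := pb.finrank.trans hdeg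
  let : Algebra (RatFunc (RatFunc k)) (RatFunc (AdjoinRoot f)) := RatFunc.liftAlgebra _ _
  refine ⟨RatFunc (RatFunc k), inferInstance, inferInstance, RatFunc (AdjoinRoot f),
    inferInstance, inferInstance, isSeparable_fractionRing_polynomial (RatFunc k) (AdjoinRoot f),
    (finrank_fractionRing_polynomial _ _).trans hfinrank, fun hsurj => ?_⟩
  obtain ⟨z, hz⟩ :=
    hsurj (Units.mk0 _ (RatFunc.algebraMap_ne_zero (X_ne_zero (R := RatFunc k))))
  exact norm_ne_algebraMap_X (by omega : 1 < Module.finrank (RatFunc k) (AdjoinRoot f)) z.val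
    (congrArg Units.val hz)
end

section
/- Let k be a field and n ≥ 2 an integer. Let L = k(x₁,…,xₙ) be the fraction field of the polynomial ring k[x₁,…,xₙ], let σ be the k-automorphism of L induced by the cyclic permutation of the variables x₁ ↦ x₂ ↦ ⋯ ↦ xₙ ↦ x₁, let Γ = ⟨σ⟩ be the cyclic group of order n it generates, and let K = L^Γ be its fixed field. Then the element s₁ = x₁ + ⋯ + xₙ lies in K, and there is no a ∈ Lˣ with N_{L/K}(a) = s₁; in particular, N_{L/K}(Lˣ) ≠ Kˣ. -/
/-!
The total degree extends from `k[x₁,…,xₙ] ∖ {0}` to a homomorphism `deg : Lˣ → ℤ`,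
`deg (p / q) = deg p - deg q`, which is invariant under permutations of the variables.
Every element of `Gal(L/K) ≅ Γ` permutes the variables, so `deg (N_{L/K} a) = [L : K] · deg a`
is divisible by `[L : K] ≥ 2`, whereas `deg s₁ = 1`.
-/

namespace IntermediateField

variable {F E : Type*} [Field F] [Field E] [Algebra F E] (H : Subgroup (E ≃ₐ[F] E)) [Finite H]

instance : FiniteDimensional (fixedField H) E :=
  inferInstanceAs (FiniteDimensional (FixedPoints.subfield H E) E)

instance : IsGalois (fixedField H) E :=
  inferInstanceAs (IsGalois (FixedPoints.subfield H E) E)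

theorem restrictScalars_mem_of_fixedField (g : E ≃ₐ[fixedField H] E) : g.restrictScalars F ∈ H := by
  obtain ⟨h, rfl⟩ := FixedPoints.toAlgAut_surjective H E g
  exact h.2

end IntermediateField

namespace MvPolynomial

section SumX

variable {R σ : Type*} [CommSemiring R] [Nontrivial R] [Fintype σ] [Nonempty σ]

theorem sum_X_ne_zero : (∑ i, X i : MvPolynomial σ R) ≠ 0 := fun h => by
  classical
  simpa [coeff_sum, coeff_X, Finsupp.single_left_inj] using
    congrArg (coeff (Finsupp.single (Classical.arbitrary σ) 1)) h

theorem totalDegree_sum_X : (∑ i, X i : MvPolynomial σ R).totalDegree = 1 :=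
  (IsHomogeneous.sum _ _ _ fun i _ => isHomogeneous_X R i).totalDegree sum_X_ne_zero

end SumX

section FracTotalDegree

variable {R σ : Type*} [CommRing R] [IsDomain R]

/-- `deg (p / q) = deg p - deg q` (see `fracTotalDegree_div`); the value at `0` is junk. -/
noncomputable def fracTotalDegree (x : FractionRing (MvPolynomial σ R)) : ℤ :=
  (IsLocalization.sec (nonZeroDivisors (MvPolynomial σ R)) x).1.totalDegree -
    ((IsLocalization.sec (nonZeroDivisors (MvPolynomial σ R)) x).2 : MvPolynomial σ R).totalDegree

theorem fracTotalDegree_div {p q : MvPolynomial σ R} (hp : p ≠ 0) (hq : q ≠ 0) :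
    fracTotalDegree (algebraMap _ (FractionRing (MvPolynomial σ R)) p / algebraMap _ _ q) =
      (p.totalDegree : ℤ) - q.totalDegree := by
  set x := algebraMap _ (FractionRing (MvPolynomial σ R)) p / algebraMap _ _ q
  have hspec := IsLocalization.sec_spec (nonZeroDivisors (MvPolynomial σ R)) x
  set a := (IsLocalization.sec (nonZeroDivisors (MvPolynomial σ R)) x).1
  set b : MvPolynomial σ R := ↑(IsLocalization.sec (nonZeroDivisors (MvPolynomial σ R)) x).2
  have hb : b ≠ 0 := nonZeroDivisors.ne_zero (IsLocalization.sec _ x).2.2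
  have hqL : algebraMap _ (FractionRing (MvPolynomial σ R)) q ≠ 0 :=
    IsFractionRing.to_map_ne_zero_of_mem_nonZeroDivisors (mem_nonZeroDivisors_of_ne_zero hq)
  have hcross : p * b = a * q := by
    refine IsFractionRing.injective _ (FractionRing (MvPolynomial σ R)) ?_
    have hx : x * algebraMap _ _ q = algebraMap _ _ p := div_mul_cancel₀ _ hqL
    rw [map_mul, map_mul]
    linear_combination (-algebraMap _ _ b) * hx + algebraMap _ _ q * hspec
  have ha : a ≠ 0 := by
    rintro ha
    rw [ha, zero_mul] at hcross
    exact mul_ne_zero hp hb hcross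
  have hdeg := congrArg totalDegree hcross
  rw [totalDegree_mul_of_isDomain hp hb, totalDegree_mul_of_isDomain ha hq] at hdeg
  show (a.totalDegree : ℤ) - b.totalDegree = _
  omega

theorem fracTotalDegree_algebraMap {p : MvPolynomial σ R} (hp : p ≠ 0) :
    fracTotalDegree (algebraMap _ (FractionRing (MvPolynomial σ R)) p) = p.totalDegree := by
  simpa using fracTotalDegree_div hp one_ne_zero

theorem fracTotalDegree_mul {x y : FractionRing (MvPolynomial σ R)} (hx : x ≠ 0) (hy : y ≠ 0) :
    fracTotalDegree (x * y) = fracTotalDegree x + fracTotalDegree y := by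
  obtain ⟨p, q, hq, rfl⟩ := IsFractionRing.div_surjective (MvPolynomial σ R) x
  obtain ⟨p', q', hq', rfl⟩ := IsFractionRing.div_surjective (MvPolynomial σ R) y
  have hq0 := nonZeroDivisors.ne_zero hq
  have hq0' := nonZeroDivisors.ne_zero hq'
  have hp0 : p ≠ 0 := by rintro rfl; simp at hx
  have hp0' : p' ≠ 0 := by rintro rfl; simp at hy
  rw [div_mul_div_comm, ← map_mul, ← map_mul,
    fracTotalDegree_div (mul_ne_zero hp0 hp0') (mul_ne_zero hq0 hq0'),
    fracTotalDegree_div hp0 hq0, fracTotalDegree_div hp0' hq0',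
    totalDegree_mul_of_isDomain hp0 hp0', totalDegree_mul_of_isDomain hq0 hq0']
  push_cast
  ring

theorem fracTotalDegree_prod {ι : Type*} (s : Finset ι) {f : ι → FractionRing (MvPolynomial σ R)}
    (hf : ∀ i ∈ s, f i ≠ 0) :
    fracTotalDegree (∏ i ∈ s, f i) = ∑ i ∈ s, fracTotalDegree (f i) := by
  classical
  induction s using Finset.induction_on with
  | empty => simpa using fracTotalDegree_algebraMap (one_ne_zero (α := MvPolynomial σ R))
  | insert i s hi ih =>
    rw [Finset.prod_insert hi, Finset.sum_insert hi,
      fracTotalDegree_mul (hf i (s.mem_insert_self i))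
        (Finset.prod_ne_zero_iff.mpr fun j hj => hf j (Finset.mem_insert_of_mem hj)),
      ih fun j hj => hf j (Finset.mem_insert_of_mem hj)]

end FracTotalDegree

section Rename

variable (R σ : Type*) [CommSemiring R]

noncomputable def renameEquivHom : Equiv.Perm σ →* (MvPolynomial σ R ≃ₐ[R] MvPolynomial σ R) where
  toFun e := renameEquiv R e
  map_one' := renameEquiv_refl R
  map_mul' e f := (renameEquiv_trans R f e).symm

variable (k : Type*) [Field k]

noncomputable def renameFracHom :
    Equiv.Perm σ →* (FractionRing (MvPolynomial σ k) ≃ₐ[k] FractionRing (MvPolynomial σ k)) :=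
  (IsFractionRing.fieldEquivOfAlgEquivHom k _).comp (renameEquivHom k σ)

variable {σ k}

theorem renameFracHom_algebraMap (e : Equiv.Perm σ) (p : MvPolynomial σ k) :
    renameFracHom σ k e (algebraMap _ _ p) = algebraMap _ _ (rename e p) :=
  IsFractionRing.fieldEquivOfAlgEquiv_algebraMap _ _ _ _ p

theorem fracTotalDegree_renameFracHom (e : Equiv.Perm σ) (x : FractionRing (MvPolynomial σ k)) :
    fracTotalDegree (renameFracHom σ k e x) = fracTotalDegree x := by
  obtain ⟨p, q, hq, rfl⟩ := IsFractionRing.div_surjective (MvPolynomial σ k) x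
  have hq0 := nonZeroDivisors.ne_zero hq
  rcases eq_or_ne p 0 with rfl | hp0
  · simp
  have hren {r : MvPolynomial σ k} (hr : r ≠ 0) : rename e r ≠ 0 :=
    (map_ne_zero_iff _ (rename_injective _ e.injective)).mpr hr
  rw [map_div₀, renameFracHom_algebraMap, renameFracHom_algebraMap,
    fracTotalDegree_div (hren hp0) (hren hq0), fracTotalDegree_div hp0 hq0,
    ← renameEquiv_apply, ← renameEquiv_apply, totalDegree_renameEquiv, totalDegree_renameEquiv]

theorem eq_renameFracHom_of_algebraMap_X
    {g : FractionRing (MvPolynomial σ k) ≃ₐ[k] FractionRing (MvPolynomial σ k)} {e : Equiv.Perm σ}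
    (h : ∀ i, g (algebraMap (MvPolynomial σ k) _ (X i)) = algebraMap (MvPolynomial σ k) _ (X (e i))) :
    g = renameFracHom σ k e :=
  AlgEquiv.coe_toAlgHom_injective <| IsLocalization.algHom_ext (nonZeroDivisors _) <|
    algHom_ext fun i => (h i).trans <| by
      rw [← rename_X e i]
      exact (renameFracHom_algebraMap e (X i)).symm

theorem fracTotalDegree_algebraMap_norm {K : IntermediateField k (FractionRing (MvPolynomial σ k))}
    [FiniteDimensional K (FractionRing (MvPolynomial σ k))]
    [IsGalois K (FractionRing (MvPolynomial σ k))]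
    (hK : ∀ g : FractionRing (MvPolynomial σ k) ≃ₐ[K] FractionRing (MvPolynomial σ k),
      g.restrictScalars k ∈ (renameFracHom σ k).range)
    {x : FractionRing (MvPolynomial σ k)} (hx : x ≠ 0) :
    fracTotalDegree (algebraMap K (FractionRing (MvPolynomial σ k)) (Algebra.norm K x)) =
      Module.finrank K (FractionRing (MvPolynomial σ k)) * fracTotalDegree x := by
  have hconj (g : FractionRing (MvPolynomial σ k) ≃ₐ[K] FractionRing (MvPolynomial σ k)) :
      fracTotalDegree (g x) = fracTotalDegree x := by
    obtain ⟨e, he⟩ := hK g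
    rw [← AlgEquiv.restrictScalars_apply k g x, ← he, fracTotalDegree_renameFracHom]
  rw [Algebra.norm_eq_prod_automorphisms, fracTotalDegree_prod _ fun g _ => by simpa using hx]
  simp only [hconj, Finset.sum_const, Finset.card_univ, nsmul_eq_mul, ← Nat.card_eq_fintype_card,
    IsGalois.card_aut_eq_finrank]

end Rename

end MvPolynomial

open MvPolynomial in
/-- Let `k` be a field and `n ≥ 2`.  Let `L = k(x₁,…,xₙ)` be
the fraction field of the polynomial ring `k[x₁,…,xₙ]`, let `σ` be the
`k`-automorphism of `L` induced by the cyclic permutation of the variables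
`x₁ ↦ x₂ ↦ ⋯ ↦ xₙ ↦ x₁` (characterized by `σ(xᵢ) = x_{i+1 mod n}`), let
`Γ = ⟨σ⟩` be the cyclic group it generates, and let `K = L^Γ` be its fixed
field.  Then `s₁ = x₁ + ⋯ + xₙ` lies in `K`, there is no `a ∈ Lˣ` with
`N_{L/K}(a) = s₁`, and in particular `N_{L/K}(Lˣ) ≠ Kˣ`, i.e. the norm map
`Lˣ → Kˣ` is not surjective. -/
theorem cyclic_fixed_field_norm_not_surjective (k : Type*) [Field k] (n : ℕ) (hn : 2 ≤ n)
    (σ : FractionRing (MvPolynomial (Fin n) k) ≃ₐ[k] FractionRing (MvPolynomial (Fin n) k))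
    (hσ : ∀ i : Fin n,
      σ (algebraMap (MvPolynomial (Fin n) k) (FractionRing (MvPolynomial (Fin n) k))
          (MvPolynomial.X i)) =
        algebraMap (MvPolynomial (Fin n) k) (FractionRing (MvPolynomial (Fin n) k))
          (MvPolynomial.X (finRotate n i))) :
    let L := FractionRing (MvPolynomial (Fin n) k)
    let Γ : Subgroup (L ≃ₐ[k] L) := Subgroup.zpowers σ
    let K : IntermediateField k L := IntermediateField.fixedField Γ
    let s₁ : L := algebraMap (MvPolynomial (Fin n) k) L (∑ i : Fin n, MvPolynomial.X i)
    s₁ ∈ K ∧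
    (¬ ∃ a : Lˣ, ((Algebra.norm K ((a : L)) : K) : L) = s₁) ∧
    ¬ Function.Surjective
        (Units.map (Algebra.norm K : L →* K) : Lˣ → (↥K)ˣ) := by
  intro L Γ K s₁
  obtain ⟨m, rfl⟩ : ∃ m, n = m + 2 := ⟨n - 2, by omega⟩
  have hσρ : σ = renameFracHom _ k (finRotate (m + 2)) := eq_renameFracHom_of_algebraMap_X hσ
  have hΓ : Γ ≤ (renameFracHom _ k).range := Subgroup.zpowers_le.mpr ⟨_, hσρ.symm⟩
  have : Finite Γ := by
    have : IsOfFinOrder σ := hσρ ▸ (renameFracHom _ k).isOfFinOrder (isOfFinOrder_of_finite _)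
    exact this.finite_zpowers.to_subtype
  have hσs₁ : σ s₁ = s₁ := by
    rw [hσρ, renameFracHom_algebraMap, ← esymm_one, esymm_isSymmetric, esymm_one]
  have hs₁ : s₁ ∈ K := (IntermediateField.mem_fixedField_iff Γ s₁).mpr fun g hg =>
    Subgroup.zpowers_le (H := MulAction.stabilizer _ s₁) |>.mpr hσs₁ hg
  have hs₁_ne : s₁ ≠ 0 := (map_ne_zero_iff _ (IsFractionRing.injective _ _)).mpr sum_X_ne_zero
  have hdeg : fracTotalDegree s₁ = 1 := by
    rw [fracTotalDegree_algebraMap sum_X_ne_zero, totalDegree_sum_X, Nat.cast_one]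
  have hrank : Module.finrank K L ≠ 1 := by
    intro h
    have hX : algebraMap (MvPolynomial (Fin (m + 2)) k) L (X 0) ∈ K :=
      (IntermediateField.finrank_eq_one_iff_eq_top.mp h) ▸ IntermediateField.mem_top
    have := (hσ 0).symm.trans (hX ⟨σ, Subgroup.mem_zpowers σ⟩)
    simpa using X_injective (IsFractionRing.injective _ _ this)
  have hno : ¬ ∃ a : Lˣ, ((Algebra.norm K (a : L) : K) : L) = s₁ := by
    rintro ⟨a, ha⟩
    have := fracTotalDegree_algebraMap_norm
      (fun g => hΓ (IntermediateField.restrictScalars_mem_of_fixedField Γ g)) a.ne_zero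
    rw [show algebraMap K L _ = s₁ from ha, hdeg] at this
    exact hrank (by exact_mod_cast Int.eq_one_of_mul_eq_one_right (by positivity) this.symm)
  refine ⟨hs₁, hno, fun hsurj => hno ?_⟩
  obtain ⟨a, ha⟩ := hsurj (Units.mk0 ⟨s₁, hs₁⟩ fun h => hs₁_ne (congrArg Subtype.val h))
  exact ⟨a, congrArg (fun u : Kˣ => ((u : K) : L)) ha⟩
end

section
/- Let k be a field, r ≥ 1, and n₁,…,n_r positive integers with N = n₁ + ⋯ + n_r. Let L = k(x₁,…,x_N), let G = S_{n₁} × ⋯ × S_{n_r} act on L by k-automorphisms, where S_{n₁} permutes the first n₁ variables, S_{n₂} the next n₂ variables, and so on, and let K = L^G be the fixed field. For each i set m_i = n₁ + ⋯ + n_{i-1} + 1 and L_i = K(x_{m_i}) ⊆ L. Then L_i is a finite separable field extension of K with [L_i : K] = n_i. -/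
/-!
The variables of the `i`-th block form a finite set `s` that `G` permutes transitively. Because
`G` permutes `s`, the product `∏_{y ∈ s} (X - y)` has `G`-fixed coefficients, so it lies in `K[X]`
and is divisible by the minimal polynomial of `x = x_{m_i}` over `K`; because every `y ∈ s` is a
`G`-conjugate of `x`, it also divides that minimal polynomial. So the minimal polynomial of `x`
has exactly the `n_i` distinct roots `s`.
-/

/-- The starting index (0-based) of the `i`-th block of consecutive variables,
for blocks of sizes `n 0, n 1, …` (so block `i` starts at `n 0 + ⋯ + n (i-1)`). -/
def blockStart {r : ℕ} (n : Fin r → ℕ) (i : Fin r) : ℕ := ∑ j ∈ Finset.Iio i, n j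

/-- The embedding of `S_{n 0} × ⋯ × S_{n (r-1)}` into the symmetric group of
`Fin N`, via a block decomposition `e : (Σ i, Fin (n i)) ≃ Fin N`: the `i`-th
factor permutes the `i`-th block of variables. -/
def blockPermHom {r : ℕ} (n : Fin r → ℕ) (N : ℕ) (e : ((i : Fin r) × Fin (n i)) ≃ Fin N) :
    ((i : Fin r) → Equiv.Perm (Fin (n i))) →* Equiv.Perm (Fin N) where
  toFun g := (e.symm.trans (Equiv.sigmaCongrRight g)).trans e
  map_one' := by
    ext j
    simp
  map_mul' g h := by
    ext j
    rcases hj : e.symm j with ⟨i, x⟩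
    simp [Equiv.Perm.mul_apply, hj]

open Polynomial IntermediateField

section FixedField

variable {k L : Type*} [Field k] [Field L] [Algebra k L] {G : Subgroup (L ≃ₐ[k] L)} {s : Finset L}

theorem coeff_prod_X_sub_C_mem_fixedField (hs : ∀ σ ∈ G, ∀ y ∈ s, σ y ∈ s) (t : ℕ) :
    (∏ y ∈ s, (X - C y)).coeff t ∈ fixedField G := by
  refine (mem_fixedField_iff _ _).2 fun σ hσ ↦ ?_
  have hσs : s.map σ.toEquiv.toEmbedding = s := Finset.map_eq_of_subset fun _ hy ↦ by
    obtain ⟨z, hz, rfl⟩ := Finset.mem_map.1 hy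
    exact hs σ hσ z hz
  have hperm : (∏ y ∈ s, (X - C y)).map (σ : L →+* L) = ∏ y ∈ s, (X - C y) := by
    conv_rhs => rw [← hσs, Finset.prod_map]
    simp [Polynomial.map_prod]
  simpa using congrArg (coeff · t) hperm

theorem minpoly_fixedField_map_eq_prod (hs : ∀ σ ∈ G, ∀ y ∈ s, σ y ∈ s) {x : L} (hx : x ∈ s)
    (hconj : ∀ y ∈ s, ∃ σ ∈ G, σ x = y) :
    IsIntegral (fixedField G) x ∧
      (minpoly (fixedField G) x).map (algebraMap (fixedField G) L) = ∏ y ∈ s, (X - C y) := by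
  set K := fixedField G
  set Q : L[X] := ∏ y ∈ s, (X - C y)
  have hQ : Q.Monic := monic_prod_of_monic _ _ fun y _ ↦ monic_X_sub_C y
  have hlifts : Q ∈ lifts (algebraMap K L) := (lifts_iff_coeff_lifts Q).2 fun t ↦
    ⟨⟨Q.coeff t, coeff_prod_X_sub_C_mem_fixedField hs t⟩, rfl⟩
  obtain ⟨P, hPQ, -, hP⟩ := lifts_and_degree_eq_and_monic hlifts hQ
  have hPx : aeval x P = 0 := by
    rw [aeval_def, eval₂_eq_eval_map, hPQ, eval_prod]
    exact Finset.prod_eq_zero hx (by simp)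
  have hint : IsIntegral K x := ⟨P, hP, by rwa [aeval_def] at hPx⟩
  have hmin : (minpoly K x).map (algebraMap K L) ≠ 0 := map_ne_zero (minpoly.ne_zero hint)
  refine ⟨hint, eq_of_monic_of_dvd_of_natDegree_le hQ ((minpoly.monic hint).map _) ?_ ?_⟩
  · have hroot : ∀ y ∈ s, aeval y (minpoly K x) = 0 := fun y hy ↦ by
      obtain ⟨σ, hσ, rfl⟩ := hconj y hy
      let τ : L →ₐ[K] L := { (σ : L →ₐ[k] L) with
        commutes' := fun c ↦ (mem_fixedField_iff _ _).1 c.2 σ hσ }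
      exact (aeval_algHom_apply τ x _).trans (by simp)
    refine (Multiset.prod_X_sub_C_dvd_iff_le_roots hmin s.val).2
      ((Multiset.le_iff_subset s.nodup).2 fun y hy ↦ ?_)
    rw [mem_roots hmin, IsRoot, eval_map, ← aeval_def]
    exact hroot y hy
  · rw [natDegree_map, ← hPQ, natDegree_map]
    exact natDegree_le_of_dvd (minpoly.dvd K x hPx) hP.ne_zero

theorem adjoin_simple_fixedField_of_orbit (hs : ∀ σ ∈ G, ∀ y ∈ s, σ y ∈ s) {x : L}
    (hx : x ∈ s) (hconj : ∀ y ∈ s, ∃ σ ∈ G, σ x = y) :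
    FiniteDimensional (fixedField G) (adjoin (fixedField G) {x}) ∧
      Algebra.IsSeparable (fixedField G) (adjoin (fixedField G) {x}) ∧
      Module.finrank (fixedField G) (adjoin (fixedField G) {x}) = s.card := by
  obtain ⟨hint, hmin⟩ := minpoly_fixedField_map_eq_prod hs hx hconj
  have hsep : IsSeparable (fixedField G) x := by
    rw [IsSeparable, ← separable_map (algebraMap (fixedField G) L), hmin]
    exact separable_prod_X_sub_C_iff'.2 fun _ _ _ _ ↦ id
  refine ⟨adjoin.finiteDimensional hint, (isSeparable_adjoin_simple_iff_isSeparable _ _).2 hsep, ?_⟩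
  rw [adjoin.finrank hint, ← natDegree_map (algebraMap (fixedField G) L), hmin,
    natDegree_prod_of_monic _ _ fun y _ ↦ monic_X_sub_C y]
  simp

end FixedField

theorem blockPermHom_apply {r : ℕ} {n : Fin r → ℕ} {N : ℕ} (e : ((i : Fin r) × Fin (n i)) ≃ Fin N)
    (g : ∀ i, Equiv.Perm (Fin (n i))) (i : Fin r) (j : Fin (n i)) :
    blockPermHom n N e g (e ⟨i, j⟩) = e ⟨i, g i j⟩ := by
  simp [blockPermHom]

theorem block_fixed_field_adjoin_first_variable_general (k : Type*) [Field k]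
    (r : ℕ) (n : Fin r → ℕ) (hn : ∀ i, 1 ≤ n i)
    (N : ℕ)
    (e : ((i : Fin r) × Fin (n i)) ≃ Fin N)
    (ρ : Equiv.Perm (Fin N) →*
      (FractionRing (MvPolynomial (Fin N) k) ≃ₐ[k] FractionRing (MvPolynomial (Fin N) k)))
    (hρ : ∀ (π : Equiv.Perm (Fin N)) (j : Fin N),
      ρ π (algebraMap (MvPolynomial (Fin N) k) (FractionRing (MvPolynomial (Fin N) k))
          (MvPolynomial.X j)) =
        algebraMap (MvPolynomial (Fin N) k) (FractionRing (MvPolynomial (Fin N) k))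
          (MvPolynomial.X (π j))) :
    let L := FractionRing (MvPolynomial (Fin N) k)
    let G : Subgroup (L ≃ₐ[k] L) := (ρ.comp (blockPermHom n N e)).range
    let K : IntermediateField k L := IntermediateField.fixedField G
    ∀ i : Fin r,
      let Li : IntermediateField K L := IntermediateField.adjoin K
        {algebraMap (MvPolynomial (Fin N) k) L (MvPolynomial.X (e ⟨i, ⟨0, hn i⟩⟩))}
      FiniteDimensional K Li ∧ Algebra.IsSeparable K Li ∧ Module.finrank K Li = n i := by
  intro L G K i Li
  let x : Fin (n i) ↪ L :=
    ⟨fun j ↦ algebraMap (MvPolynomial (Fin N) k) L (MvPolynomial.X (e ⟨i, j⟩)), fun a b hab ↦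
      eq_of_heq (Sigma.mk.inj_iff.1 (e.injective (MvPolynomial.X_injective
        (IsFractionRing.injective (MvPolynomial (Fin N) k) L hab)))).2⟩
  have hx : ∀ g j, ρ (blockPermHom n N e g) (x j) = x (g i j) := fun g j ↦
    (hρ _ _).trans (by rw [blockPermHom_apply]; rfl)
  have hstable : ∀ σ ∈ G, ∀ y ∈ Finset.univ.map x, σ y ∈ Finset.univ.map x := by
    rintro _ ⟨g, rfl⟩ _ hy
    obtain ⟨j, -, rfl⟩ := Finset.mem_map.1 hy
    rw [MonoidHom.comp_apply, hx]
    exact Finset.mem_map_of_mem _ (Finset.mem_univ _)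
  have hconj : ∀ y ∈ Finset.univ.map x, ∃ σ ∈ G, σ (x ⟨0, hn i⟩) = y := by
    intro _ hy
    obtain ⟨j, -, rfl⟩ := Finset.mem_map.1 hy
    refine ⟨_, ⟨Pi.mulSingle i (Equiv.swap ⟨0, hn i⟩ j), rfl⟩, ?_⟩
    rw [MonoidHom.comp_apply, hx]
    simp
  obtain ⟨hfin, hsep, hrank⟩ :=
    adjoin_simple_fixedField_of_orbit hstable (Finset.mem_map_of_mem x (Finset.mem_univ _)) hconj
  exact ⟨hfin, hsep, hrank.trans (by simp)⟩

/-- Let `k` be a field, `r ≥ 1`, and `n₁,…,n_r` positive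
integers with `N = n₁ + ⋯ + n_r`.  Let `L = k(x₁,…,x_N)` (the fraction field
of `MvPolynomial (Fin N) k`), let `G = S_{n₁} × ⋯ × S_{n_r}` act on `L` by
`k`-automorphisms, where `S_{n₁}` permutes the first `n₁` variables, `S_{n₂}`
the next `n₂`, and so on (the action on `L` being induced by permuting the
variables, via the homomorphism `ρ` characterized by `ρ π (x_j) = x_{π j}`),
and let `K = L^G` be the fixed field.  For each `i` let `L_i = K(x_{m_i})`
where `m_i = n₁ + ⋯ + n_{i-1} + 1` (i.e. `x_{m_i}` is the first variable of
the `i`-th block).  Then `L_i` is a finite separable field extension of `K`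
with `[L_i : K] = n_i`. -/
theorem block_fixed_field_adjoin_first_variable (k : Type*) [Field k]
    (r : ℕ) (hr : 1 ≤ r) (n : Fin r → ℕ) (hn : ∀ i, 1 ≤ n i)
    (N : ℕ) (hN : N = ∑ i, n i)
    (e : ((i : Fin r) × Fin (n i)) ≃ Fin N)
    (he : ∀ (i : Fin r) (j : Fin (n i)), ((e ⟨i, j⟩ : Fin N) : ℕ) = blockStart n i + (j : ℕ))
    (ρ : Equiv.Perm (Fin N) →*
      (FractionRing (MvPolynomial (Fin N) k) ≃ₐ[k] FractionRing (MvPolynomial (Fin N) k)))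
    (hρ : ∀ (π : Equiv.Perm (Fin N)) (j : Fin N),
      ρ π (algebraMap (MvPolynomial (Fin N) k) (FractionRing (MvPolynomial (Fin N) k))
          (MvPolynomial.X j)) =
        algebraMap (MvPolynomial (Fin N) k) (FractionRing (MvPolynomial (Fin N) k))
          (MvPolynomial.X (π j))) :
    let L := FractionRing (MvPolynomial (Fin N) k)
    let G : Subgroup (L ≃ₐ[k] L) := (ρ.comp (blockPermHom n N e)).range
    let K : IntermediateField k L := IntermediateField.fixedField G
    ∀ i : Fin r,
      let Li : IntermediateField K L := IntermediateField.adjoin K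
        {algebraMap (MvPolynomial (Fin N) k) L (MvPolynomial.X (e ⟨i, ⟨0, hn i⟩⟩))}
      FiniteDimensional K Li ∧ Algebra.IsSeparable K Li ∧ Module.finrank K Li = n i :=
  block_fixed_field_adjoin_first_variable_general k r n hn N e ρ hρ
end

section
/- Let k be a field, r ≥ 1, and n₁,…,n_r positive integers with N = n₁ + ⋯ + n_r. Let L = k(x₁,…,x_N), let G = S_{n₁} × ⋯ × S_{n_r} act on L by permuting the variables in consecutive blocks of sizes n₁,…,n_r, and let K = L^G. For each i set m_i = n₁ + ⋯ + n_{i-1} + 1 and L_i = K(x_{m_i}) ⊆ L. Let deg : Lˣ → ℤ be any degree homomorphism on L. Then for every i and every a ∈ L_iˣ, the integer deg(N_{L_i/K}(a)) is divisible by n_i (where N_{L_i/K}(a) ∈ Kˣ is viewed as an element of Lˣ). -/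
/-- A *degree homomorphism* on the rational function field `k(x₁,…,x_N)`
(realized as the fraction field of `MvPolynomial (Fin N) k`): a group
homomorphism `deg : k(x₁,…,x_N)ˣ → ℤ` with `deg p` equal to the total degree
of `p` for every nonzero polynomial `p`. -/
def IsDegreeHom (k : Type*) [Field k] (N : ℕ)
    (d : (FractionRing (MvPolynomial (Fin N) k))ˣ → ℤ) : Prop :=
  (∀ a b : (FractionRing (MvPolynomial (Fin N) k))ˣ, d (a * b) = d a + d b) ∧
  ∀ (u : (FractionRing (MvPolynomial (Fin N) k))ˣ) (p : MvPolynomial (Fin N) k), p ≠ 0 →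
    (u : FractionRing (MvPolynomial (Fin N) k)) =
      algebraMap (MvPolynomial (Fin N) k) (FractionRing (MvPolynomial (Fin N) k)) p →
    d u = (p.totalDegree : ℤ)

/-! The total degree is invariant under permutations of the variables, so `deg` is constant on
the orbits of `Gal(L/K)`, which is the image of `G`. Since `N_{L/K}(a) = ∏_{σ ∈ Gal(L/K)} σ a`,
this gives `deg N_{L/K}(a) = [L:K] deg a`; comparing with `N_{L/K}(a) = N_{L_i/K}(a)^[L:L_i]` in
the torsion-free group `ℤ` yields `deg N_{L_i/K}(a) = [L_i:K] deg a`. Finally `[L_i:K]` is the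
size of the `G`-orbit of `x_{m_i}`, namely the `i`-th block of variables, of size `n_i`. -/

open IntermediateField Module MvPolynomial

section FixedField

variable {k L : Type*} [Field k] [Field L] [Algebra k L] (G : Subgroup (L ≃ₐ[k] L)) [Finite G]

instance IntermediateField.finiteDimensional_fixedField : FiniteDimensional (fixedField G) L :=
  inferInstanceAs (FiniteDimensional (FixedPoints.subfield G L) L)

instance IntermediateField.isGalois_fixedField : IsGalois (fixedField G) L :=
  IsGalois.of_fixed_field L G

theorem IntermediateField.exists_mem_coe_eq_of_fixedField (σ : Gal(L/fixedField G)) :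
    ∃ g ∈ G, ⇑σ = ⇑g := by
  obtain ⟨g, hg⟩ := FixedPoints.toAlgAut_surjective G L σ
  exact ⟨g, g.2, by rw [← hg]; rfl⟩

theorem IntermediateField.finrank_adjoin_simple_fixedField (x : L) :
    finrank (fixedField G) (fixedField G)⟮x⟯ = Nat.card (MulAction.orbit G x) := by
  have := Fintype.ofFinite G
  classical
  rw [adjoin.finrank (IsIntegral.of_finite _ x)]
  change (minpoly (FixedPoints.subfield G L) x).natDegree = _
  rw [← FixedPoints.minpoly_eq_minpoly G L x]
  -- over `L^G` the minimal polynomial of `x` is `∏ (X - y)`, `y` running over the orbit `G • x`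
  refine (Polynomial.natDegree_toSubring (prodXSubSMul G L x) _ _).trans ?_
  rw [prodXSubSMul, Polynomial.natDegree_prod _ _ fun _ _ => Polynomial.X_sub_C_ne_zero _]
  simp only [Polynomial.natDegree_X_sub_C, Finset.sum_const, Finset.card_univ, smul_eq_mul, mul_one]
  rw [← Nat.card_eq_fintype_card, Nat.card_congr (MulAction.orbitEquivQuotientStabilizer G x)]

end FixedField

section Norm

variable {K L M : Type*} [Field K] [Field L] [Algebra K L] [FiniteDimensional K L] [IsGalois K L]
  [CommMonoid M] (φ : Lˣ →* M)

theorem map_eq_pow_finrank_of_eq_norm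
    (hφ : ∀ (σ : Gal(L/K)) (u v : Lˣ), (v : L) = σ u → φ v = φ u) (a b : Lˣ)
    (hb : (b : L) = algebraMap K L (Algebra.norm K (a : L))) : φ b = φ a ^ finrank K L := by
  let conj (σ : Gal(L/K)) : Lˣ := Units.map (σ : L →* L) a
  have hprod : b = ∏ σ : Gal(L/K), conj σ := by
    ext
    rw [hb, Algebra.norm_eq_prod_automorphisms, Units.coe_prod]
    rfl
  rw [hprod, map_prod, Finset.prod_congr rfl fun σ _ => hφ σ a (conj σ) rfl, Finset.prod_const,
    Finset.card_univ, ← Nat.card_eq_fintype_card, IsGalois.card_aut_eq_finrank]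

theorem map_eq_pow_finrank_of_eq_norm_intermediateField [IsMulTorsionFree M]
    (hφ : ∀ (σ : Gal(L/K)) (u v : Lˣ), (v : L) = σ u → φ v = φ u) (F : IntermediateField K L) (a : Fˣ) (b : Lˣ)
    (hb : (b : L) = algebraMap K L (Algebra.norm K (a : F))) :
    φ b = φ (Units.map (algebraMap F L) a) ^ finrank K F := by
  set aL : Lˣ := Units.map (algebraMap F L) a
  have hbpow : ((b ^ finrank F L : Lˣ) : L) = algebraMap K L (Algebra.norm K (aL : L)) := by
    rw [Units.val_pow_eq_pow_val, hb, ← Algebra.norm_norm (S := F) (a := (aL : L))]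
    rw [Units.coe_map, MonoidHom.coe_coe, Algebra.norm_algebraMap, map_pow, map_pow]
  have := map_eq_pow_finrank_of_eq_norm φ hφ aL _ hbpow
  rw [map_pow, ← finrank_mul_finrank K F L, pow_mul] at this
  exact pow_left_injective Module.finrank_pos.ne' this

end Norm


section RationalFunctions

variable {k σ : Type*} [Field k]

local notation "k[σ]" => MvPolynomial σ k
local notation "K(σ)" => FractionRing (MvPolynomial σ k)

theorem algEquiv_algebraMap_eq_rename (τ : K(σ) ≃ₐ[k] K(σ)) (π : σ → σ)
    (hτ : ∀ j, τ (algebraMap k[σ] K(σ) (X j)) = algebraMap k[σ] K(σ) (X (π j))) (p : k[σ]) :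
    τ (algebraMap k[σ] K(σ) p) = algebraMap k[σ] K(σ) (rename π p) := by
  let ι := IsScalarTower.toAlgHom k k[σ] K(σ)
  have : (τ : K(σ) →ₐ[k] K(σ)).comp ι = ι.comp (rename π) :=
    algHom_ext fun j => by simpa [ι] using hτ j
  exact DFunLike.congr_fun this p

end RationalFunctions

namespace IsDegreeHom

variable {k : Type*} [Field k] {N : ℕ} {d : (FractionRing (MvPolynomial (Fin N) k))ˣ → ℤ}

local notation "P" => MvPolynomial (Fin N) k
local notation "L" => FractionRing (MvPolynomial (Fin N) k)

noncomputable def toMonoidHom (hd : IsDegreeHom k N d) : Lˣ →* Multiplicative ℤ :=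
  MonoidHom.mk' (fun u => .ofAdd (d u)) fun a b => by simp [hd.1]

theorem apply_eq_sub (hd : IsDegreeHom k N d) {u : Lˣ} {p q : P}
    (hp : p ≠ 0) (hq : q ≠ 0) (hu : (u : L) = algebraMap P L p / algebraMap P L q) :
    d u = p.totalDegree - q.totalDegree := by
  have hq' : algebraMap P L q ≠ 0 := (IsFractionRing.to_map_ne_zero_of_mem_nonZeroDivisors
    (mem_nonZeroDivisors_of_ne_zero hq))
  have hmul := hd.1 u (Units.mk0 _ hq')
  rw [hd.2 (Units.mk0 _ hq') q hq rfl, hd.2 _ p hp (by simp [hu, hq'])] at hmul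
  omega

theorem apply_eq_of_eq_algEquiv (hd : IsDegreeHom k N d) (τ : L ≃ₐ[k] L) (π : Equiv.Perm (Fin N))
    (hτ : ∀ j, τ (algebraMap P L (X j)) = algebraMap P L (X (π j))) {u v : Lˣ}
    (hv : (v : L) = τ u) : d v = d u := by
  obtain ⟨p, q, hq, hu⟩ := IsFractionRing.div_surjective (A := MvPolynomial (Fin N) k) (u : L)
  have hq0 : q ≠ 0 := nonZeroDivisors.ne_zero hq
  have hp0 : p ≠ 0 := by
    rintro rfl
    exact u.ne_zero (by rw [← hu, map_zero, zero_div])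
  have hrename (w : P) (hw : w ≠ 0) : rename π w ≠ 0 :=
    (map_ne_zero_iff _ (rename_injective _ π.injective)).mpr hw
  have hdeg (w : P) : (rename π w).totalDegree = w.totalDegree := totalDegree_renameEquiv π w
  have hv' : (v : L) = algebraMap P L (rename π p) / algebraMap P L (rename π q) := by
    rw [hv, ← hu, map_div₀, algEquiv_algebraMap_eq_rename τ π hτ,
      algEquiv_algebraMap_eq_rename τ π hτ]
  rw [hd.apply_eq_sub hp0 hq0 hu.symm, hd.apply_eq_sub (hrename p hp0) (hrename q hq0) hv',
    hdeg, hdeg]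

end IsDegreeHom

section Block

variable {k : Type*} [Field k] {r : ℕ} {n : Fin r → ℕ} {N : ℕ}
  (e : ((i : Fin r) × Fin (n i)) ≃ Fin N)

theorem blockPermHom_apply_mk (g : (i : Fin r) → Equiv.Perm (Fin (n i))) (i : Fin r)
    (j : Fin (n i)) : blockPermHom n N e g (e ⟨i, j⟩) = e ⟨i, g i j⟩ := by
  simp [blockPermHom, Equiv.sigmaCongrRight]

local notation "P" => MvPolynomial (Fin N) k
local notation "L" => FractionRing (MvPolynomial (Fin N) k)

theorem card_orbit_blockPerm_X (ρ : Equiv.Perm (Fin N) →* (L ≃ₐ[k] L))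
    (hρ : ∀ π j, ρ π (algebraMap P L (X j)) = algebraMap P L (X (π j)))
    (i : Fin r) (j₀ : Fin (n i)) :
    Nat.card (MulAction.orbit (ρ.comp (blockPermHom n N e)).range
      (algebraMap P L (X (e ⟨i, j₀⟩)))) = n i := by
  let x (j : Fin (n i)) : L := algebraMap P L (X (e ⟨i, j⟩))
  have hx : Function.Injective x := fun j j' h => by
    simpa using e.injective (X_injective (IsFractionRing.injective P L h))
  have horbit : MulAction.orbit (ρ.comp (blockPermHom n N e)).range (x j₀) = Set.range x := by
    ext y
    constructor
    · rintro ⟨⟨_, g, rfl⟩, rfl⟩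
      exact ⟨g i j₀, by simp [x, Subgroup.smul_def, hρ, blockPermHom_apply_mk]⟩
    · rintro ⟨j, rfl⟩
      let g : (i : Fin r) → Equiv.Perm (Fin (n i)) := Pi.mulSingle i (Equiv.swap j₀ j)
      exact ⟨⟨_, g, rfl⟩, by simp [x, g, Subgroup.smul_def, hρ, blockPermHom_apply_mk]⟩
  rw [horbit, Nat.card_range_of_injective hx, Nat.card_fin]

end Block

theorem degree_of_block_norm_divisible_general (k : Type*) [Field k]
    (r : ℕ) (n : Fin r → ℕ) (hn : ∀ i, 1 ≤ n i)
    (N : ℕ)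
    (e : ((i : Fin r) × Fin (n i)) ≃ Fin N)
    (ρ : Equiv.Perm (Fin N) →*
      (FractionRing (MvPolynomial (Fin N) k) ≃ₐ[k] FractionRing (MvPolynomial (Fin N) k)))
    (hρ : ∀ (π : Equiv.Perm (Fin N)) (j : Fin N),
      ρ π (algebraMap (MvPolynomial (Fin N) k) (FractionRing (MvPolynomial (Fin N) k))
          (MvPolynomial.X j)) =
        algebraMap (MvPolynomial (Fin N) k) (FractionRing (MvPolynomial (Fin N) k))
          (MvPolynomial.X (π j)))
    (d : (FractionRing (MvPolynomial (Fin N) k))ˣ → ℤ) (hd : IsDegreeHom k N d) :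
    let L := FractionRing (MvPolynomial (Fin N) k)
    let G : Subgroup (L ≃ₐ[k] L) := (ρ.comp (blockPermHom n N e)).range
    let K : IntermediateField k L := IntermediateField.fixedField G
    ∀ i : Fin r,
      let Li : IntermediateField K L := IntermediateField.adjoin K
        {algebraMap (MvPolynomial (Fin N) k) L (MvPolynomial.X (e ⟨i, ⟨0, hn i⟩⟩))}
      ∀ (a : (↥Li)ˣ) (b : Lˣ),
        (b : L) = ((Algebra.norm K ((a : ↥Li)) : ↥K) : L) → (n i : ℤ) ∣ d b := by
  intro L G K i Li a b hb
  have : Finite G := Set.finite_coe_iff.mpr (Set.finite_range _)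
  have hfinrank : finrank K Li = n i := by
    rw [finrank_adjoin_simple_fixedField, card_orbit_blockPerm_X e ρ hρ]
  have hinv (σ : Gal(L/K)) (u v : Lˣ) (hv : (v : L) = σ u) :
      hd.toMonoidHom v = hd.toMonoidHom u := by
    obtain ⟨_, ⟨g, rfl⟩, hσ⟩ := exists_mem_coe_eq_of_fixedField G σ
    exact congrArg Multiplicative.ofAdd
      (hd.apply_eq_of_eq_algEquiv _ _ (hρ _) (hv.trans (congrFun hσ u)))
  have hnorm := map_eq_pow_finrank_of_eq_norm_intermediateField hd.toMonoidHom hinv Li a b hb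
  rw [hfinrank] at hnorm
  exact ⟨_, by simpa [IsDegreeHom.toMonoidHom] using congrArg Multiplicative.toAdd hnorm⟩

/-- In the block situation (`L = k(x₁,…,x_N)`,
`G = S_{n₁} × ⋯ × S_{n_r}` acting by permuting the variables in consecutive
blocks of sizes `n₁,…,n_r`, `K = L^G`, `L_i = K(x_{m_i})` with
`m_i = n₁ + ⋯ + n_{i-1} + 1`), let `deg : Lˣ → ℤ` be any degree homomorphism
on `L`.  Then for every `i` and every `a ∈ L_iˣ`, the integer
`deg (N_{L_i/K}(a))` is divisible by `n_i` (where `N_{L_i/K}(a) ∈ Kˣ` is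
viewed as an element of `Lˣ`). -/
theorem degree_of_block_norm_divisible (k : Type*) [Field k]
    (r : ℕ) (hr : 1 ≤ r) (n : Fin r → ℕ) (hn : ∀ i, 1 ≤ n i)
    (N : ℕ) (hN : N = ∑ i, n i)
    (e : ((i : Fin r) × Fin (n i)) ≃ Fin N)
    (he : ∀ (i : Fin r) (j : Fin (n i)), ((e ⟨i, j⟩ : Fin N) : ℕ) = blockStart n i + (j : ℕ))
    (ρ : Equiv.Perm (Fin N) →*
      (FractionRing (MvPolynomial (Fin N) k) ≃ₐ[k] FractionRing (MvPolynomial (Fin N) k)))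
    (hρ : ∀ (π : Equiv.Perm (Fin N)) (j : Fin N),
      ρ π (algebraMap (MvPolynomial (Fin N) k) (FractionRing (MvPolynomial (Fin N) k))
          (MvPolynomial.X j)) =
        algebraMap (MvPolynomial (Fin N) k) (FractionRing (MvPolynomial (Fin N) k))
          (MvPolynomial.X (π j)))
    (d : (FractionRing (MvPolynomial (Fin N) k))ˣ → ℤ) (hd : IsDegreeHom k N d) :
    let L := FractionRing (MvPolynomial (Fin N) k)
    let G : Subgroup (L ≃ₐ[k] L) := (ρ.comp (blockPermHom n N e)).range
    let K : IntermediateField k L := IntermediateField.fixedField G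
    ∀ i : Fin r,
      let Li : IntermediateField K L := IntermediateField.adjoin K
        {algebraMap (MvPolynomial (Fin N) k) L (MvPolynomial.X (e ⟨i, ⟨0, hn i⟩⟩))}
      ∀ (a : (↥Li)ˣ) (b : Lˣ),
        (b : L) = ((Algebra.norm K ((a : ↥Li)) : ↥K) : L) → (n i : ℤ) ∣ d b :=
  degree_of_block_norm_divisible_general k r n hn N e ρ hρ d hd
end
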